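/- Let A = [[a,b],[c,d]] ∈ SL(2,ℤ) be hyperbolic (|a+d| > 2), with real fixed points α₋ < α₊. Suppose v ∈ ℚ ∪ {∞} is such that v and A·v are Farey-adjacent. Then every point w ∈ ℚ ∪ {∞} that lies on the same side of the axis as v and is Farey-adjacent to some point on the opposite side of the axis satisfies w = Aⁿ·v for some integer n; that is, every visible vertex on the same side of the axis as v is A-equivalent to v. -/

import Mathlib

open OnePoint Matrix

/-- `SL(2,ℤ)`. -/
abbrev SL2Z := Matrix.SpecialLinearGroup (Fin 2) ℤ

/-- The Möbius action of `SL(2,ℤ)` on the rational projective line `ℚ ∪ {∞}`: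
the matrix `[[a,b],[c,d]]` sends `x` to `(ax+b)/(cx+d)` (and `∞ = 1/0`). -/
def mob (A : SL2Z) : OnePoint ℚ → OnePoint ℚ
  | OnePoint.infty =>
      if (A.1 1 0 : ℚ) = 0 then OnePoint.infty
      else OnePoint.some ((A.1 0 0 : ℚ) / (A.1 1 0 : ℚ))
  | OnePoint.some x =>
      if (A.1 1 0 : ℚ) * x + (A.1 1 1 : ℚ) = 0 then OnePoint.infty
      else OnePoint.some (((A.1 0 0 : ℚ) * x + (A.1 0 1 : ℚ)) /
        ((A.1 1 0 : ℚ) * x + (A.1 1 1 : ℚ)))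

/-- Farey adjacency on `ℚ ∪ {∞}`: the reduced fractions `p/q` and `r/s`
are adjacent iff `|ps - qr| = 1`, where `∞ = 1/0`.  (Rationals in Lean are
stored in lowest terms with positive denominator.) -/
def fareyAdj : OnePoint ℚ → OnePoint ℚ → Prop
  | OnePoint.infty, OnePoint.infty => False
  | OnePoint.infty, OnePoint.some x => x.den = 1
  | OnePoint.some x, OnePoint.infty => x.den = 1
  | OnePoint.some x, OnePoint.some y => |x.num * (y.den : ℤ) - (x.den : ℤ) * y.num| = 1

/-- A point of `ℚ ∪ {∞}` lies (strictly) inside the axis with endpoints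
`αm < αp` if, as a real number, it lies strictly between them; `∞` counts
as outside. -/
def insideAxis (αm αp : ℝ) : OnePoint ℚ → Prop
  | OnePoint.infty => False
  | OnePoint.some x => αm < (x : ℝ) ∧ (x : ℝ) < αp

/-!
Represent points of `ℚ ∪ {∞}` by primitive vectors of `ℤ²`. Farey adjacency of `v` and
`A v` says that `e = v` and `A e` form a basis of `ℤ²`. In this basis `A` acts as
multiplication by `λ` on `ℤ[λ]`, where `λ² = tλ - 1` and `t = tr A`, and the form
`det(z, A z)`, whose sign tells on which side of the axis `z` lies, becomes
`±N(m + nλ) = ±(m² + tmn + n²)`. A visible vertex `w` on the side of `v` is then a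
primitive `(m, n)` of positive norm with a Farey neighbour of negative norm.
Take `t > 2` (the case `t < -2` follows by `(m, n) ↦ (m, -n)`). If `m` and `n` have
opposite signs then, up to `(m, n) ↦ -(m, n)` and `(m, n) ↦ (n, m)`, dividing by `λ`,
`(m, n) ↦ (n + tm, -m)`, preserves both conditions and shrinks `|m| + |n|`; otherwise the
neighbour forces `(m, n) = ±(1, 0)` or `±(0, 1)`. Hence `m + nλ = ±λʲ`, i.e. `w = Aʲ v`.
-/

namespace FareyAxis

def normForm (t m n : ℤ) : ℤ := m ^ 2 + t * m * n + n ^ 2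

/-- `UnitOrbit t m n` says that `m + nλ = ±λ ^ j` for some `j : ℤ`, where `λ² = tλ - 1`;
multiplication by `λ` is `(m, n) ↦ (-n, m + tn)`. -/
inductive UnitOrbit (t : ℤ) : ℤ → ℤ → Prop
  | one : UnitOrbit t 1 0
  | neg {m n : ℤ} : UnitOrbit t m n → UnitOrbit t (-m) (-n)
  | mul {m n : ℤ} : UnitOrbit t m n → UnitOrbit t (-n) (m + t * n)
  | div {m n : ℤ} : UnitOrbit t m n → UnitOrbit t (n + t * m) (-m)

/-- A visible vertex on the side of `v`, in coordinates `(m, n)` with respect to the basis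
`(v, A v)` and with `t = tr A`. -/
def Visible (t m n : ℤ) : Prop :=
  0 < normForm t m n ∧ ∃ k l, normForm t k l < 0 ∧ |m * l - n * k| = 1

variable {t m n : ℤ}

namespace UnitOrbit

theorem swap (h : UnitOrbit t m n) : UnitOrbit t n m := by
  induction h with
  | one => simpa using one.mul
  | neg _ ih => exact ih.neg
  | mul _ ih => simpa [mul_comm] using ih.div
  | div _ ih => simpa [mul_comm] using ih.mul

theorem neg_trace (h : UnitOrbit t m n) : UnitOrbit (-t) m (-n) := by
  induction h with
  | one => simpa using one
  | neg _ ih => exact ih.neg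
  | mul _ ih => simpa using ih.mul.neg
  | div _ ih => convert ih.div.neg using 1; ring

end UnitOrbit

namespace Visible

theorem neg (h : Visible t m n) : Visible t (-m) (-n) := by
  obtain ⟨hpos, k, l, hneg, hkl⟩ := h
  refine ⟨by simpa [normForm] using hpos, -k, -l, by simpa [normForm] using hneg, ?_⟩
  rwa [show -m * -l - -n * -k = m * l - n * k by ring]

theorem swap (h : Visible t m n) : Visible t n m := by
  obtain ⟨hpos, k, l, hneg, hkl⟩ := h
  refine ⟨by unfold normForm at *; linarith, l, k, by unfold normForm at *; linarith, ?_⟩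
  rwa [← abs_neg, show -(n * k - m * l) = m * l - n * k by ring]

theorem neg_trace (h : Visible t m n) : Visible (-t) m (-n) := by
  obtain ⟨hpos, k, l, hneg, hkl⟩ := h
  refine ⟨by simpa [normForm] using hpos, k, -l, by simpa [normForm] using hneg, ?_⟩
  rwa [← abs_neg, show -(m * -l - -n * k) = m * l - n * k by ring]

theorem div (h : Visible t m n) : Visible t (n + t * m) (-m) := by
  obtain ⟨hpos, k, l, hneg, hkl⟩ := h
  refine ⟨by unfold normForm at *; linarith, l + t * k, -k, by unfold normForm at *; linarith,
    ?_⟩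
  rwa [show (n + t * m) * -k - -m * (l + t * k) = m * l - n * k by ring]

theorem unitOrbit_of_nonneg (ht : 0 ≤ t) (h : Visible t m n) (hm : 0 ≤ m) (hn : 0 ≤ n) :
    UnitOrbit t m n := by
  obtain ⟨hpos, k, l, hneg, hkl⟩ := h
  have hstraddle : k * l < 0 := by
    by_contra! h
    unfold normForm at hneg
    nlinarith
  have hsum : m + n ≤ 1 := by
    rw [← hkl]
    rcases mul_neg_iff.mp hstraddle with ⟨hk, hl⟩ | ⟨hk, hl⟩
    · exact le_abs.mpr (Or.inr (by nlinarith))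
    · exact le_abs.mpr (Or.inl (by nlinarith))
  have hne : ¬(m = 0 ∧ n = 0) := by
    rintro ⟨rfl, rfl⟩
    simp [normForm] at hpos
  obtain ⟨rfl, rfl⟩ | ⟨rfl, rfl⟩ : (m = 1 ∧ n = 0) ∨ (m = 0 ∧ n = 1) := by omega
  · exact .one
  · simpa using UnitOrbit.one.mul

theorem natAbs_div_lt (ht : 0 < t) (h : Visible t m n) (hm : m < 0) (hmn : 0 < m + n) :
    (n + t * m).natAbs + (-m).natAbs < m.natAbs + n.natAbs := by
  have hlt : n + t * m < n := by nlinarith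
  -- otherwise `normForm t m n ≤ m ^ 2 - n ^ 2 < 0`
  have hgt : -n < n + t * m := by
    by_contra! h'
    have := h.1
    unfold normForm at this
    nlinarith
  omega

theorem exists_smaller (ht : 2 < t) (h : Visible t m n) (hmn : m * n < 0) :
    ∃ m' n', Visible t m' n' ∧ m'.natAbs + n'.natAbs < m.natAbs + n.natAbs ∧
      (UnitOrbit t m' n' → UnitOrbit t m n) := by
  have key : ∀ {m n}, Visible t m n → m < 0 → 0 < m + n →
      ∃ m' n', Visible t m' n' ∧ m'.natAbs + n'.natAbs < m.natAbs + n.natAbs ∧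
        (UnitOrbit t m' n' → UnitOrbit t m n) := fun h hm hmn =>
    ⟨_, _, h.div, h.natAbs_div_lt (by omega) hm hmn, fun o => by convert o.mul using 1 <;> ring⟩
  have hsum : m + n ≠ 0 := by
    intro h0
    have := h.1
    rw [show n = -m by omega] at this
    unfold normForm at this
    nlinarith
  rcases mul_neg_iff.mp hmn with ⟨hm, hn⟩ | ⟨hm, hn⟩ <;>
    rcases lt_or_gt_of_ne hsum with hs | hs
  · obtain ⟨m', n', h', hlt, hback⟩ := key h.neg (by omega) (by omega)
    exact ⟨m', n', h', by simpa using hlt, fun o => by simpa using (hback o).neg⟩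
  · obtain ⟨m', n', h', hlt, hback⟩ := key h.swap (by omega) (by omega)
    exact ⟨m', n', h', by omega, fun o => (hback o).swap⟩
  · obtain ⟨m', n', h', hlt, hback⟩ := key h.swap.neg (by omega) (by omega)
    refine ⟨m', n', h', by rw [Int.natAbs_neg, Int.natAbs_neg] at hlt; omega, fun o => ?_⟩
    simpa using (hback o).neg.swap
  · exact key h hm hs

theorem unitOrbit (ht : 2 < t) (h : Visible t m n) : UnitOrbit t m n := by
  induction hN : m.natAbs + n.natAbs using Nat.strong_induction_on generalizing m n with
  | _ N ih =>
  rcases lt_or_ge (m * n) 0 with hmn | hmn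
  · obtain ⟨m', n', h', hlt, hback⟩ := h.exists_smaller ht hmn
    exact hback (ih _ (hN ▸ hlt) h' rfl)
  · rcases mul_nonneg_iff.mp hmn with ⟨hm, hn⟩ | ⟨hm, hn⟩
    · exact h.unitOrbit_of_nonneg (by omega) hm hn
    · simpa using (h.neg.unitOrbit_of_nonneg (by omega) (by omega) (by omega)).neg

theorem unitOrbit_of_two_lt_abs (ht : 2 < |t|) (h : Visible t m n) : UnitOrbit t m n := by
  rcases lt_abs.mp ht with ht | ht
  · exact h.unitOrbit ht
  · simpa using (h.neg_trace.unitOrbit ht).neg_trace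

end Visible

def cross (z w : Fin 2 → ℤ) : ℤ := z 0 * w 1 - z 1 * w 0

def fixedForm (A : SL2Z) (z : Fin 2 → ℤ) : ℤ := cross z (A • z)

theorem smul_eq (A : SL2Z) (z : Fin 2 → ℤ) :
    A • z = ![A.1 0 0 * z 0 + A.1 0 1 * z 1, A.1 1 0 * z 0 + A.1 1 1 * z 1] := by
  simp [Matrix.SpecialLinearGroup.smul_def]

theorem det_eq_one (A : SL2Z) : A.1 0 0 * A.1 1 1 - A.1 0 1 * A.1 1 0 = 1 := by
  have := A.2
  rwa [Matrix.det_fin_two] at this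

theorem cross_lin_comb (z y : Fin 2 → ℤ) (m n k l : ℤ) :
    cross (m • z + n • y) (k • z + l • y) = (m * l - n * k) * cross z y := by
  simp only [cross, Pi.add_apply, Pi.smul_apply, smul_eq_mul]; ring

theorem exists_eq_lin_comb {z y : Fin 2 → ℤ} (h : IsUnit (cross z y)) (w : Fin 2 → ℤ) :
    ∃ m n : ℤ, w = m • z + n • y := by
  have hsq := Int.isUnit_mul_self h
  refine ⟨cross z y * cross w y, cross z y * cross z w, ?_⟩
  ext i
  fin_cases i <;>
    simp only [Fin.zero_eta, Fin.mk_one, cross, Pi.add_apply, Pi.smul_apply, smul_eq_mul] at hsq ⊢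
  · linear_combination (-w 0) * hsq
  · linear_combination (-w 1) * hsq

theorem smul_smul_eq_trace_smul_sub (A : SL2Z) (z : Fin 2 → ℤ) :
    A • A • z = (A.1 0 0 + A.1 1 1) • A • z - z := by
  have hdet := det_eq_one A
  ext i
  fin_cases i <;> simp only [Fin.zero_eta, Fin.mk_one, smul_eq, Pi.sub_apply, Pi.smul_apply,
    smul_eq_mul, Matrix.cons_val_zero, Matrix.cons_val_one]
  · linear_combination (-z 0) * hdet
  · linear_combination (-z 1) * hdet

theorem smul_lin_comb (A : SL2Z) (z : Fin 2 → ℤ) (m n : ℤ) :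
    A • (m • z + n • A • z) = (-n) • z + (m + (A.1 0 0 + A.1 1 1) * n) • A • z := by
  rw [smul_add, smul_comm A m, smul_comm A n, smul_smul_eq_trace_smul_sub]
  generalize A • z = y
  module

theorem inv_smul_lin_comb (A : SL2Z) (z : Fin 2 → ℤ) (m n : ℤ) :
    A⁻¹ • (m • z + n • A • z) =
      (n + (A.1 0 0 + A.1 1 1) * m) • z + (-m) • A • z := by
  rw [inv_smul_eq_iff, smul_lin_comb]
  generalize A • z = y
  module

theorem fixedForm_lin_comb (A : SL2Z) (z : Fin 2 → ℤ) (m n : ℤ) :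
    fixedForm A (m • z + n • A • z) = normForm (A.1 0 0 + A.1 1 1) m n * fixedForm A z := by
  rw [fixedForm, smul_lin_comb, cross_lin_comb, fixedForm, normForm]
  ring

theorem UnitOrbit.exists_zpow_smul {A : SL2Z} {m n : ℤ} (z : Fin 2 → ℤ)
    (h : UnitOrbit (A.1 0 0 + A.1 1 1) m n) :
    ∃ j : ℤ, A ^ j • z = m • z + n • A • z ∨
      A ^ j • z = -(m • z + n • A • z) := by
  induction h with
  | one => exact ⟨0, Or.inl (by simp)⟩
  | neg _ ih =>
    obtain ⟨j, hj | hj⟩ := ih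
    · exact ⟨j, Or.inr (by simp only [hj, neg_smul, neg_add, neg_neg])⟩
    · exact ⟨j, Or.inl (by simp only [hj, neg_smul, neg_add])⟩
  | mul _ ih =>
    obtain ⟨j, hj | hj⟩ := ih
    · exact ⟨1 + j, Or.inl (by rw [_root_.zpow_one_add, mul_smul, hj, smul_lin_comb])⟩
    · exact ⟨1 + j, Or.inr (by
        rw [_root_.zpow_one_add, mul_smul, hj, smul_neg, smul_lin_comb])⟩
  | div _ ih =>
    obtain ⟨j, hj | hj⟩ := ih
    · exact ⟨-1 + j, Or.inl (by
        rw [_root_.zpow_add, _root_.zpow_neg_one, mul_smul, hj, inv_smul_lin_comb])⟩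
    · exact ⟨-1 + j, Or.inr (by
        rw [_root_.zpow_add, _root_.zpow_neg_one, mul_smul, hj, smul_neg, inv_smul_lin_comb])⟩

def primVec : OnePoint ℚ → Fin 2 → ℤ
  | OnePoint.infty => ![1, 0]
  | OnePoint.some x => ![x.num, x.den]

def ofVec (z : Fin 2 → ℤ) : OnePoint ℚ :=
  if z 1 = 0 then ∞ else ((z 0 / z 1 : ℚ) : OnePoint ℚ)

theorem isCoprime_primVec (p : OnePoint ℚ) : IsCoprime (primVec p 0) (primVec p 1) := by
  cases p with
  | infty => exact isCoprime_one_left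
  | coe x => exact Int.isCoprime_iff_gcd_eq_one.mpr x.reduced

theorem ofVec_primVec (p : OnePoint ℚ) : ofVec (primVec p) = p := by
  cases p with
  | infty => simp [ofVec, primVec]
  | coe x => simp [ofVec, primVec, Rat.num_div_den]

theorem ofVec_neg (z : Fin 2 → ℤ) : ofVec (-z) = ofVec z := by
  simp [ofVec, neg_div_neg_eq]

theorem primVec_ofVec_of_pos {z : Fin 2 → ℤ} (hz : IsCoprime (z 0) (z 1)) (h : 0 < z 1) :
    primVec (ofVec z) = z := by
  have hcop := Int.isCoprime_iff_gcd_eq_one.mp hz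
  simp only [ofVec, h.ne', if_false, primVec]
  ext i; fin_cases i
  · simpa using Rat.num_div_eq_of_coprime h hcop
  · simpa using Rat.den_div_eq_of_coprime h hcop

theorem primVec_ofVec {z : Fin 2 → ℤ} (hz : IsCoprime (z 0) (z 1)) :
    primVec (ofVec z) = z ∨ primVec (ofVec z) = -z := by
  rcases lt_trichotomy (z 1) 0 with h | h | h
  · right
    rw [← ofVec_neg, primVec_ofVec_of_pos (by simpa using hz.neg_neg) (by simpa using h)]
  · rw [h, isCoprime_zero_right, Int.isUnit_iff] at hz
    rcases hz with h0 | h0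
    · left; ext i; fin_cases i <;> simp [ofVec, primVec, h, h0]
    · right; ext i; fin_cases i <;> simp [ofVec, primVec, h, h0]
  · exact Or.inl (primVec_ofVec_of_pos hz h)

theorem fareyAdj_iff (p q : OnePoint ℚ) :
    fareyAdj p q ↔ |cross (primVec p) (primVec q)| = 1 := by
  cases p <;> cases q <;> simp [fareyAdj, cross, primVec]

theorem mob_eq_ofVec (A : SL2Z) (p : OnePoint ℚ) : mob A p = ofVec (A • primVec p) := by
  cases p with
  | infty => simp [mob, ofVec, primVec, smul_eq]
  | coe x =>
    have hden : (x.den : ℚ) ≠ 0 := by exact_mod_cast x.den_ne_zero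
    have hnum : (x.num : ℚ) = x * x.den := x.mul_den_eq_num.symm
    have hc : (A.1 1 0 : ℚ) * x + A.1 1 1 =
        ((A.1 1 0 * x.num + A.1 1 1 * x.den : ℤ) : ℚ) / x.den := by
      rw [eq_div_iff hden]; push_cast; rw [hnum]; ring
    have ha : (A.1 0 0 : ℚ) * x + A.1 0 1 =
        ((A.1 0 0 * x.num + A.1 0 1 * x.den : ℤ) : ℚ) / x.den := by
      rw [eq_div_iff hden]; push_cast; rw [hnum]; ring
    simp only [mob, ofVec, smul_eq, primVec]
    rw [hc, ha]
    simp only [div_eq_zero_iff, hden, or_false, Int.cast_eq_zero, div_div_div_cancel_right₀ hden,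
      Matrix.cons_val_zero, Matrix.cons_val_one]
    rfl

theorem cross_neg_right (z w : Fin 2 → ℤ) : cross z (-w) = -cross z w := by
  simp only [cross, Pi.neg_apply]; ring

theorem fixedForm_eq (A : SL2Z) (z : Fin 2 → ℤ) :
    fixedForm A z = A.1 1 0 * z 0 ^ 2 + (A.1 1 1 - A.1 0 0) * z 0 * z 1 - A.1 0 1 * z 1 ^ 2 := by
  simp only [fixedForm, cross, smul_eq, Matrix.cons_val_zero, Matrix.cons_val_one]; ring

theorem exists_eq_smul_of_cross_eq_zero {z w : Fin 2 → ℤ} (hz : IsCoprime (z 0) (z 1))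
    (h : cross z w = 0) : ∃ μ : ℤ, w = μ • z := by
  obtain ⟨u, v, huv⟩ := hz
  refine ⟨u * w 0 + v * w 1, ?_⟩
  unfold cross at h
  ext i; fin_cases i <;> simp only [Fin.zero_eta, Fin.mk_one, Pi.smul_apply, smul_eq_mul]
  · linear_combination (-w 0) * huv - v * h
  · linear_combination (-w 1) * huv + u * h

/-- A hyperbolic matrix has no rational eigenvector: an integer eigenvalue `μ` would satisfy
`μ (t - μ) = 1`, forcing `t = ±2`. -/
theorem fixedForm_ne_zero {A : SL2Z} (hA : 2 < |A.1 0 0 + A.1 1 1|) {z : Fin 2 → ℤ}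
    (hz : IsCoprime (z 0) (z 1)) : fixedForm A z ≠ 0 := by
  intro h
  obtain ⟨μ, hμ⟩ := exists_eq_smul_of_cross_eq_zero hz h
  have hchar : (μ * ((A.1 0 0 + A.1 1 1) - μ) - 1) • z = 0 := by
    have := smul_smul_eq_trace_smul_sub A z
    rw [hμ, smul_comm A μ, hμ] at this
    linear_combination (norm := module) -this
  have hz0 : z ≠ 0 := fun h0 => not_isCoprime_zero_zero (by simpa [h0] using hz)
  have hunit : μ * ((A.1 0 0 + A.1 1 1) - μ) = 1 :=
    sub_eq_zero.mp ((smul_eq_zero.mp hchar).resolve_right hz0)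
  rcases Int.eq_one_or_neg_one_of_mul_eq_one' hunit with ⟨h1, h2⟩ | ⟨h1, h2⟩ <;>
    rw [show A.1 0 0 + A.1 1 1 = 2 * μ by omega, h1] at hA <;> norm_num at hA

theorem quadratic_eq_mul_sub_mul_sub {K : Type*} [Field K] {a b c r s : K} (hrs : r ≠ s)
    (hr : a * r ^ 2 + b * r - c = 0) (hs : a * s ^ 2 + b * s - c = 0) (x : K) :
    a * x ^ 2 + b * x - c = a * ((x - r) * (x - s)) := by
  have hsum : a * (r + s) + b = 0 := by
    have : (s - r) * (a * (r + s) + b) = 0 := by linear_combination hs - hr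
    simpa [sub_eq_zero, hrs.symm] using this
  linear_combination (x - r) * hsum + hr

theorem sub_mul_sub_neg_iff {R : Type*} [CommRing R] [LinearOrder R] [IsStrictOrderedRing R]
    {r s x : R} (h : r < s) : (x - r) * (x - s) < 0 ↔ r < x ∧ x < s := by
  constructor
  · intro hx
    constructor <;> nlinarith
  · rintro ⟨h1, h2⟩
    exact mul_neg_of_pos_of_neg (by linarith) (by linarith)

theorem insideAxis_iff (A : SL2Z) {αm αp : ℝ} (hlt : αm < αp)
    (hm : (A.1 1 0 : ℝ) * αm ^ 2 + (A.1 1 1 - A.1 0 0 : ℝ) * αm - A.1 0 1 = 0)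
    (hp : (A.1 1 0 : ℝ) * αp ^ 2 + (A.1 1 1 - A.1 0 0 : ℝ) * αp - A.1 0 1 = 0)
    (hc : A.1 1 0 ≠ 0) (p : OnePoint ℚ) :
    insideAxis αm αp p ↔ A.1 1 0 * fixedForm A (primVec p) < 0 := by
  cases p with
  | infty => simpa [insideAxis, fixedForm_eq, primVec] using mul_self_nonneg (A.1 1 0)
  | coe x =>
    have hnum : (x.num : ℝ) = x * x.den := by exact_mod_cast x.mul_den_eq_num.symm
    have key : ((A.1 1 0 * fixedForm A (primVec x) : ℤ) : ℝ) =
        (x.den * A.1 1 0) ^ 2 * (((x : ℝ) - αm) * ((x : ℝ) - αp)) := by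
      have hq := quadratic_eq_mul_sub_mul_sub hlt.ne hm hp x
      rw [fixedForm_eq]
      simp only [primVec, Matrix.cons_val_zero, Matrix.cons_val_one]
      push_cast
      rw [hnum]
      linear_combination ((x.den : ℝ) ^ 2 * A.1 1 0) * hq
    have hpos : (0 : ℝ) < (x.den * A.1 1 0) ^ 2 := by
      have : (A.1 1 0 : ℝ) ≠ 0 := by exact_mod_cast hc
      positivity
    rw [← Int.cast_lt (R := ℝ), key, Int.cast_zero, ← smul_eq_mul,
      smul_neg_iff_of_pos_left hpos, sub_mul_sub_neg_iff hlt]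
    rfl

theorem mul_neg_iff_iff_pos_mul {c x y : ℤ} (hc : c ≠ 0) (hx : x ≠ 0) (hy : y ≠ 0) :
    (c * x < 0 ↔ c * y < 0) ↔ 0 < x * y := by
  rcases hc.lt_or_gt with hc | hc <;> rcases hx.lt_or_gt with hx | hx <;>
    rcases hy.lt_or_gt with hy | hy <;> simp [mul_neg_iff, mul_pos_iff, *] <;> omega

theorem isUnit_fixedForm_of_fareyAdj_mob {A : SL2Z} {v : OnePoint ℚ}
    (hv : fareyAdj v (mob A v)) : IsUnit (fixedForm A (primVec v)) := by
  rw [fareyAdj_iff, mob_eq_ofVec] at hv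
  rw [Int.isUnit_iff_abs_eq, fixedForm]
  have hcop : IsCoprime ((A • primVec v) 0) ((A • primVec v) 1) :=
    (isCoprime_primVec v).mulVecSL A
  rcases primVec_ofVec hcop with h | h
  · rwa [h] at hv
  · rwa [h, cross_neg_right, abs_neg] at hv

theorem visible_of_eq_lin_comb {A : SL2Z} {e w u : Fin 2 → ℤ} {m n k l : ℤ}
    (he : IsUnit (fixedForm A e))
    (hw : w = m • e + n • A • e) (hu : u = k • e + l • A • e)
    (hwe : 0 < fixedForm A w * fixedForm A e) (huw : fixedForm A u * fixedForm A w < 0)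
    (hwu : |cross w u| = 1) : Visible (A.1 0 0 + A.1 1 1) m n := by
  have he2 := Int.isUnit_mul_self he
  subst hw hu
  simp only [fixedForm_lin_comb] at hwe huw
  have habs : |cross e (A • e)| = 1 := Int.isUnit_iff_abs_eq.mp he
  rw [cross_lin_comb, abs_mul, habs, mul_one] at hwu
  have hpos : 0 < normForm (A.1 0 0 + A.1 1 1) m n := by
    rwa [mul_assoc, he2, mul_one] at hwe
  rw [mul_mul_mul_comm, he2, mul_one] at huw
  exact ⟨hpos, k, l, neg_of_mul_neg_left huw hpos.le, hwu⟩

end FareyAxis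

open FareyAxis

theorem visible_vertices_same_side_equivalent (A : SL2Z)
    (hyp : |A.1 0 0 + A.1 1 1| > 2)
    (αm αp : ℝ) (hlt : αm < αp)
    (hm : (A.1 1 0 : ℝ) * αm ^ 2 + ((A.1 1 1 : ℝ) - (A.1 0 0 : ℝ)) * αm - (A.1 0 1 : ℝ) = 0)
    (hp : (A.1 1 0 : ℝ) * αp ^ 2 + ((A.1 1 1 : ℝ) - (A.1 0 0 : ℝ)) * αp - (A.1 0 1 : ℝ) = 0)
    (v : OnePoint ℚ) (hv : fareyAdj v (mob A v)) :
    ∀ w : OnePoint ℚ,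
      (insideAxis αm αp w ↔ insideAxis αm αp v) →
      (∃ u : OnePoint ℚ, fareyAdj w u ∧ ¬ (insideAxis αm αp u ↔ insideAxis αm αp w)) →
      ∃ n : ℤ, mob (A ^ n) v = w := by
  rintro w hside ⟨u, hwu, hopp⟩
  have hF (p : OnePoint ℚ) : fixedForm A (primVec p) ≠ 0 :=
    fixedForm_ne_zero hyp (isCoprime_primVec p)
  -- `∞` is not a fixed point
  have hc : A.1 1 0 ≠ 0 := by simpa [fixedForm_eq, primVec] using hF ∞
  have hsides (p q : OnePoint ℚ) : (insideAxis αm αp p ↔ insideAxis αm αp q) ↔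
      0 < fixedForm A (primVec p) * fixedForm A (primVec q) := by
    rw [insideAxis_iff A hlt hm hp hc, insideAxis_iff A hlt hm hp hc,
      mul_neg_iff_iff_pos_mul hc (hF p) (hF q)]
  have hwv := (hsides w v).mp hside
  have huw : fixedForm A (primVec u) * fixedForm A (primVec w) < 0 :=
    (not_lt.mp (mt (hsides u w).mpr hopp)).lt_of_ne (mul_ne_zero (hF u) (hF w))
  have he := isUnit_fixedForm_of_fareyAdj_mob hv
  obtain ⟨m, n, hw⟩ := exists_eq_lin_comb he (primVec w)
  obtain ⟨k, l, hu⟩ := exists_eq_lin_comb he (primVec u)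
  have hvis := visible_of_eq_lin_comb he hw hu hwv huw ((fareyAdj_iff w u).mp hwu)
  obtain ⟨j, hj | hj⟩ := (hvis.unitOrbit_of_two_lt_abs hyp).exists_zpow_smul (primVec v)
  · exact ⟨j, by rw [mob_eq_ofVec, hj, ← hw, ofVec_primVec]⟩
  · exact ⟨j, by rw [mob_eq_ofVec, hj, ← hw, ofVec_neg, ofVec_primVec]⟩
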